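/- Let f : ℝⁿ → ℝ be differentiable, attaining its global minimum value f* = f(x*) at a point x*, satisfying the Polyak–Łojasiewicz inequality f(y) − f* ≤ (1/(2σ))‖∇f(y)‖² for all y ∈ ℝⁿ with σ > 0, and additionally satisfying the quadratic growth condition f(y) − f* ≥ (ν/2)‖y − x*‖² for all y ∈ ℝⁿ, with ν > 0. Let t₀ ∈ ℝ, T_p > 0, r a positive integer, 𝒯(t) = (T_p/(T_p + t₀ − t))^r on [t₀, t₀ + T_p), and k > 0. Suppose x : [t₀, t₀ + T_p) → ℝⁿ is differentiable with ẋ(t) = −k 𝒯(t) ∇f(x(t)). Then for every t ∈ [t₀, t₀ + T_p), ‖x(t) − x*‖² ≤ (2/ν) · exp(−2σ k ∫_{t₀}^{t} 𝒯(τ) dτ) · (f(x(t₀)) − f*), and consequently x(t) → x* as t → (t₀ + T_p)⁻. -/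

import Mathlib

/-!
Along the flow, `d/dt (f(x) - f*) = -k𝒯 ‖∇f(x)‖² ≤ -2σk𝒯 (f(x) - f*)` by the PŁ inequality, so
`(f(x(t)) - f*) · exp (2σk ∫𝒯)` is nonincreasing, and quadratic growth turns this decay of the
optimality gap into the bound on `‖x - x*‖²`. For `r ≥ 1` we have `𝒯 ≥ T_p / (T_p + t₀ - t)`,
whose integral `T_p log (T_p / (T_p + t₀ - t))` blows up at `t₀ + T_p`, so the bound tends to `0`.
-/

/-- The time-scaling function `𝒯(t) = (T_p / (T_p + t₀ - t))^r`. -/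
noncomputable def Tscale (t₀ Tp : ℝ) (r : ℕ) (t : ℝ) : ℝ := (Tp / (Tp + t₀ - t)) ^ r

open Real Filter Topology Set

section GradientFlow

variable {E : Type*} [NormedAddCommGroup E] [InnerProductSpace ℝ E] [CompleteSpace E]
  {f : E → ℝ} {x : ℝ → E}

theorem hasDerivAt_comp_of_hasDerivAt_smul_gradient {c t : ℝ} (hf : DifferentiableAt ℝ f (x t))
    (hx : HasDerivAt x (c • gradient f (x t)) t) :
    HasDerivAt (fun s => f (x s)) (c * ‖gradient f (x t)‖ ^ 2) t := by
  have h := hf.hasGradientAt.hasFDerivAt.comp_hasDerivAt t hx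
  rwa [InnerProductSpace.toDual_apply_apply, real_inner_smul_right,
    real_inner_self_eq_norm_sq] at h

theorem antitoneOn_mul_exp_of_pl {m σ : ℝ} {c C : ℝ → ℝ} {D : Set ℝ} (hD : Convex ℝ D)
    (hf : Differentiable ℝ f) (hσ : 0 < σ)
    (hPL : ∀ y, f y - m ≤ 1 / (2 * σ) * ‖gradient f y‖ ^ 2)
    (hC : ∀ t ∈ D, HasDerivAt C (c t) t) (hc : ∀ t ∈ D, 0 ≤ c t)
    (hx : ∀ t ∈ D, HasDerivAt x (-c t • gradient f (x t)) t) :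
    AntitoneOn (fun t => (f (x t) - m) * exp (2 * σ * C t)) D := by
  have hderiv : ∀ t ∈ D, HasDerivAt (fun t => (f (x t) - m) * exp (2 * σ * C t))
      (c t * (2 * σ * (f (x t) - m) - ‖gradient f (x t)‖ ^ 2) * exp (2 * σ * C t)) t :=
    fun t ht => ((((hasDerivAt_comp_of_hasDerivAt_smul_gradient (hf _) (hx t ht)).sub_const m).mul
      (((hC t ht).const_mul (2 * σ)).exp))).congr_deriv (by ring)
  refine antitoneOn_of_hasDerivWithinAt_nonpos hD
    (fun t ht => (hderiv t ht).continuousAt.continuousWithinAt)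
    (fun t ht => (hderiv t (interior_subset ht)).hasDerivWithinAt) fun t ht => ?_
  have hPL' : 2 * σ * (f (x t) - m) ≤ ‖gradient f (x t)‖ ^ 2 := by
    have h := hPL (x t)
    rw [div_mul_eq_mul_div, le_div_iff₀ (by positivity)] at h
    linarith
  exact mul_nonpos_of_nonpos_of_nonneg
    (mul_nonpos_of_nonneg_of_nonpos (hc t (interior_subset ht)) (by linarith)) (exp_pos _).le

theorem sq_norm_sub_le_of_pl_of_quadratic_growth {xstar : E} {σ ν : ℝ} {c C : ℝ → ℝ}
    {D : Set ℝ} (hD : Convex ℝ D) (hf : Differentiable ℝ f) (hσ : 0 < σ)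
    (hPL : ∀ y, f y - f xstar ≤ 1 / (2 * σ) * ‖gradient f y‖ ^ 2) (hν : 0 < ν)
    (hQG : ∀ y, ν / 2 * ‖y - xstar‖ ^ 2 ≤ f y - f xstar)
    (hC : ∀ t ∈ D, HasDerivAt C (c t) t) (hc : ∀ t ∈ D, 0 ≤ c t)
    (hx : ∀ t ∈ D, HasDerivAt x (-c t • gradient f (x t)) t)
    {t₀ t : ℝ} (ht₀ : t₀ ∈ D) (ht : t ∈ D) (hle : t₀ ≤ t) :
    ‖x t - xstar‖ ^ 2 ≤ 2 / ν * exp (-2 * σ * (C t - C t₀)) * (f (x t₀) - f xstar) := by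
  have hdecay := antitoneOn_mul_exp_of_pl hD hf hσ hPL hC hc hx ht₀ ht hle
  set a := exp (-2 * σ * (C t - C t₀))
  have hshift : exp (2 * σ * C t₀) = a * exp (2 * σ * C t) := by
    rw [← exp_add]; ring_nf
  have hdecay' : ν / 2 * ‖x t - xstar‖ ^ 2 * exp (2 * σ * C t)
      ≤ a * (f (x t₀) - f xstar) * exp (2 * σ * C t) := by
    calc _ ≤ (f (x t) - f xstar) * exp (2 * σ * C t) := by gcongr; exact hQG _
      _ ≤ (f (x t₀) - f xstar) * exp (2 * σ * C t₀) := hdecay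
      _ = _ := by rw [hshift]; ring
  have hscaled := le_of_mul_le_mul_right hdecay' (exp_pos _)
  calc ‖x t - xstar‖ ^ 2 = 2 / ν * (ν / 2 * ‖x t - xstar‖ ^ 2) := by field_simp
    _ ≤ 2 / ν * (a * (f (x t₀) - f xstar)) := by gcongr
    _ = _ := by ring

end GradientFlow

section TimeScaling

variable {t₀ Tp : ℝ} {r : ℕ} {t : ℝ}

theorem Tscale_pos (hTp : 0 < Tp) (ht : t < t₀ + Tp) : 0 < Tscale t₀ Tp r t :=
  pow_pos (div_pos hTp (by linarith)) r

theorem continuousOn_Tscale : ContinuousOn (Tscale t₀ Tp r) (Iio (t₀ + Tp)) := fun t ht =>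
  ((continuousAt_const.div (by fun_prop) (by linarith [mem_Iio.1 ht] : 0 < Tp + t₀ - t).ne').pow
    r).continuousWithinAt

theorem intervalIntegrable_Tscale (ht : t ∈ Ico t₀ (t₀ + Tp)) :
    IntervalIntegrable (Tscale t₀ Tp r) MeasureTheory.volume t₀ t :=
  (continuousOn_Tscale.mono fun _ hs => hs.2.trans_lt ht.2).intervalIntegrable_of_Icc ht.1

theorem hasDerivAt_integral_Tscale (ht : t ∈ Ico t₀ (t₀ + Tp)) :
    HasDerivAt (fun u => ∫ τ in t₀..u, Tscale t₀ Tp r τ) (Tscale t₀ Tp r t) t :=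
  intervalIntegral.integral_hasDerivAt_right (intervalIntegrable_Tscale ht)
    (continuousOn_Tscale.stronglyMeasurableAtFilter isOpen_Iio t ht.2)
    (continuousOn_Tscale.continuousAt (Iio_mem_nhds ht.2))

theorem Tscale_one_le (hr : 0 < r) (ht : t ∈ Ico t₀ (t₀ + Tp)) :
    Tscale t₀ Tp 1 t ≤ Tscale t₀ Tp r t := by
  rw [Tscale, pow_one]
  exact le_self_pow₀ ((one_le_div (by linarith [ht.2])).2 (by linarith [ht.1])) hr.ne'

theorem integral_Tscale_one (hTp : 0 < Tp) (ht : t < t₀ + Tp) :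
    ∫ τ in t₀..t, Tscale t₀ Tp 1 τ = Tp * log (Tscale t₀ Tp 1 t) := by
  simp only [Tscale, pow_one, div_eq_mul_inv]
  rw [intervalIntegral.integral_const_mul,
    intervalIntegral.integral_comp_sub_left (fun u => u⁻¹) (Tp + t₀), add_sub_cancel_right,
    integral_inv_of_pos (by linarith) hTp, div_eq_mul_inv]

theorem tendsto_Tscale_one_atTop (hTp : 0 < Tp) :
    Tendsto (Tscale t₀ Tp 1) (𝓝[<] (t₀ + Tp)) atTop := by
  have hgap : Tendsto (fun t => Tp + t₀ - t) (𝓝[<] (t₀ + Tp)) (𝓝[>] 0) := by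
    refine tendsto_nhdsWithin_iff.2 ⟨?_, eventually_nhdsWithin_of_forall fun t ht => ?_⟩
    · exact ((by fun_prop : Continuous fun t : ℝ => Tp + t₀ - t).tendsto' _ _ (by ring)).mono_left
        nhdsWithin_le_nhds
    · exact mem_Ioi.2 (by linarith [mem_Iio.1 ht])
  exact (hgap.inv_tendsto_nhdsGT_zero.const_mul_atTop hTp).congr fun t => by
    simp [Tscale, div_eq_mul_inv]

theorem tendsto_integral_Tscale_atTop (hTp : 0 < Tp) (hr : 0 < r) :
    Tendsto (fun t => ∫ τ in t₀..t, Tscale t₀ Tp r τ) (𝓝[<] (t₀ + Tp)) atTop := by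
  refine tendsto_atTop_mono' _ ?_
    ((tendsto_log_atTop.comp (tendsto_Tscale_one_atTop hTp)).const_mul_atTop hTp)
  filter_upwards [Ioo_mem_nhdsLT (by linarith : t₀ < t₀ + Tp)] with t ht
  have ht' : t ∈ Ico t₀ (t₀ + Tp) := Ioo_subset_Ico_self ht
  rw [Function.comp_apply, ← integral_Tscale_one hTp ht.2]
  exact intervalIntegral.integral_mono_on ht.1.le (intervalIntegrable_Tscale ht')
    (intervalIntegrable_Tscale ht') fun s hs => Tscale_one_le hr ⟨hs.1, hs.2.trans_lt ht.2⟩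

end TimeScaling

theorem pl_gradient_flow_state_convergence_general
    (n : ℕ) (f : EuclideanSpace ℝ (Fin n) → ℝ) (hf : Differentiable ℝ f)
    (xstar : EuclideanSpace ℝ (Fin n))
    (σ : ℝ) (hσ : 0 < σ)
    (hPL : ∀ y, f y - f xstar ≤ 1 / (2 * σ) * ‖gradient f y‖ ^ 2)
    (ν : ℝ) (hν : 0 < ν)
    (hQG : ∀ y, ν / 2 * ‖y - xstar‖ ^ 2 ≤ f y - f xstar)
    (t₀ Tp : ℝ) (hTp : 0 < Tp) (r : ℕ) (hr : 0 < r) (k : ℝ) (hk : 0 < k)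
    (x : ℝ → EuclideanSpace ℝ (Fin n))
    (hx : ∀ t ∈ Set.Ico t₀ (t₀ + Tp),
      HasDerivAt x (-(k * Tscale t₀ Tp r t) • gradient f (x t)) t) :
    (∀ t ∈ Set.Ico t₀ (t₀ + Tp),
      ‖x t - xstar‖ ^ 2
        ≤ 2 / ν * Real.exp (-2 * σ * k * ∫ τ in t₀..t, Tscale t₀ Tp r τ)
            * (f (x t₀) - f xstar)) ∧
    Filter.Tendsto x (nhdsWithin (t₀ + Tp) (Set.Iio (t₀ + Tp))) (nhds xstar) := by
  set I : ℝ → ℝ := fun t => ∫ τ in t₀..t, Tscale t₀ Tp r τ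
  have hbound : ∀ t ∈ Ico t₀ (t₀ + Tp),
      ‖x t - xstar‖ ^ 2 ≤ 2 / ν * exp (-2 * σ * k * I t) * (f (x t₀) - f xstar) := by
    intro t ht
    have h := sq_norm_sub_le_of_pl_of_quadratic_growth (convex_Ico t₀ (t₀ + Tp)) hf hσ hPL hν hQG
      (C := fun t => k * I t) (fun s hs => (hasDerivAt_integral_Tscale hs).const_mul k)
      (fun s hs => (mul_pos hk (Tscale_pos hTp hs.2)).le) hx (left_mem_Ico.2 (by linarith)) ht ht.1
    simpa only [I, intervalIntegral.integral_same, mul_zero, sub_zero, mul_assoc] using h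
  refine ⟨hbound, ?_⟩
  have hrate : Tendsto (fun t => 2 / ν * exp (-2 * σ * k * I t) * (f (x t₀) - f xstar))
      (𝓝[<] (t₀ + Tp)) (𝓝 0) := by
    have hexponent : Tendsto (fun t => -2 * σ * k * I t) (𝓝[<] (t₀ + Tp)) atBot :=
      (tendsto_integral_Tscale_atTop hTp hr).const_mul_atTop_of_neg (by nlinarith)
    simpa using ((tendsto_exp_atBot.comp hexponent).const_mul (2 / ν)).mul_const
      (f (x t₀) - f xstar)
  have hsq : Tendsto (fun t => ‖x t - xstar‖ ^ 2) (𝓝[<] (t₀ + Tp)) (𝓝 0) :=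
    squeeze_zero' (Eventually.of_forall fun _ => by positivity)
      (mem_of_superset (Ioo_mem_nhdsLT (by linarith)) fun t ht =>
        hbound t (Ioo_subset_Ico_self ht)) hrate
  rw [tendsto_iff_norm_sub_tendsto_zero]
  simpa using hsq.sqrt

/-- for a PŁ function with quadratic growth, the time-varying
feedback gradient flow satisfies
`‖x(t) - x*‖² ≤ (2/ν) exp(-2σk∫_{t₀}^{t}𝒯) (f(x(t₀)) - f*)` and
`x(t) → x*` as `t → (t₀ + T_p)⁻`. -/
theorem pl_gradient_flow_state_convergence
    (n : ℕ) (f : EuclideanSpace ℝ (Fin n) → ℝ) (hf : Differentiable ℝ f)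
    (xstar : EuclideanSpace ℝ (Fin n)) (hmin : ∀ y, f xstar ≤ f y)
    (σ : ℝ) (hσ : 0 < σ)
    (hPL : ∀ y, f y - f xstar ≤ 1 / (2 * σ) * ‖gradient f y‖ ^ 2)
    (ν : ℝ) (hν : 0 < ν)
    (hQG : ∀ y, ν / 2 * ‖y - xstar‖ ^ 2 ≤ f y - f xstar)
    (t₀ Tp : ℝ) (hTp : 0 < Tp) (r : ℕ) (hr : 0 < r) (k : ℝ) (hk : 0 < k)
    (x : ℝ → EuclideanSpace ℝ (Fin n))
    (hx : ∀ t ∈ Set.Ico t₀ (t₀ + Tp),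
      HasDerivAt x (-(k * Tscale t₀ Tp r t) • gradient f (x t)) t) :
    (∀ t ∈ Set.Ico t₀ (t₀ + Tp),
      ‖x t - xstar‖ ^ 2
        ≤ 2 / ν * Real.exp (-2 * σ * k * ∫ τ in t₀..t, Tscale t₀ Tp r τ)
            * (f (x t₀) - f xstar)) ∧
    Filter.Tendsto x (nhdsWithin (t₀ + Tp) (Set.Iio (t₀ + Tp))) (nhds xstar) :=
  pl_gradient_flow_state_convergence_general n f hf xstar σ hσ hPL ν hν hQG t₀ Tp hTp r hr k hk x hx
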